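/- arXiv:1010.3047 — 2 statements merged into one kernel-verified Lean document; each statement's English description precedes it below -/
import Mathlib

section
/- Let 0 < H < 1/2 and define μ_R((a,b]×(c,d]) := ½(|d−a|^{2H} + |c−b|^{2H} − |d−b|^{2H} − |c−a|^{2H}) for 0 ≤ a ≤ b and 0 ≤ c ≤ d. Then for any intervals (a,b], (c,d] ⊂ [0,T], one has |μ_R((a,b]×(c,d])| ≤ min((b−a)^{2H}, (d−c)^{2H}). -/
/-!
For `0 ≤ α ≤ 1` the map `x ↦ x ^ α` on `[0, ∞)` is subadditive, hence `α`-Hölder with constant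
`1`; consequently `t ↦ |t - a| ^ α - |t - b| ^ α` is bounded in absolute value by `(b - a) ^ α`.
Writing `μ_R` as half the difference of two such expressions (at `t = d` and `t = c`) bounds it by
`(b - a) ^ (2H)`, and the symmetry of `μ_R` in the two intervals gives the bound by `(d - c) ^ (2H)`.
-/

/-- The rectangular increment of the fBm covariance kernel. -/
noncomputable def muR (H a b c d : ℝ) : ℝ :=
  (1/2) * (|d - a| ^ (2*H) + |c - b| ^ (2*H) - |d - b| ^ (2*H) - |c - a| ^ (2*H))

namespace Real

theorem abs_rpow_sub_rpow_le {p x y : ℝ} (hx : 0 ≤ x) (hy : 0 ≤ y) (hp : 0 ≤ p) (hp1 : p ≤ 1) :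
    |x ^ p - y ^ p| ≤ |x - y| ^ p := by
  wlog hyx : y ≤ x generalizing x y
  · rw [abs_sub_comm, abs_sub_comm x]
    exact this hy hx (le_of_not_ge hyx)
  have hsub : x ^ p ≤ y ^ p + (x - y) ^ p := by
    simpa using rpow_add_le_add_rpow hy (sub_nonneg.2 hyx) hp hp1
  rw [abs_of_nonneg (sub_nonneg.2 hyx), abs_of_nonneg (sub_nonneg.2 (rpow_le_rpow hy hyx hp))]
  linarith

theorem abs_rpow_abs_sub_sub_rpow_abs_sub_le {p : ℝ} (hp : 0 ≤ p) (hp1 : p ≤ 1) (t a b : ℝ) :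
    |(|t - a| ^ p - |t - b| ^ p)| ≤ |b - a| ^ p := by
  have hdist : |(|t - a| - |t - b|)| ≤ |b - a| := by
    simpa using abs_abs_sub_abs_le_abs_sub (t - a) (t - b)
  exact (abs_rpow_sub_rpow_le (abs_nonneg _) (abs_nonneg _) hp hp1).trans
    (rpow_le_rpow (abs_nonneg _) hdist hp)

end Real

theorem muR_comm (H a b c d : ℝ) : muR H a b c d = muR H c d a b := by
  simp only [muR, abs_sub_comm d a, abs_sub_comm c b, abs_sub_comm d b, abs_sub_comm c a]
  ring

theorem abs_muR_le {H a b : ℝ} (hH0 : 0 ≤ H) (hH : H ≤ 1/2) (hab : a ≤ b) (c d : ℝ) :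
    |muR H a b c d| ≤ (b - a) ^ (2*H) := by
  have hp : 0 ≤ 2 * H := by positivity
  have hp1 : 2 * H ≤ 1 := by linarith
  have hd := Real.abs_rpow_abs_sub_sub_rpow_abs_sub_le hp hp1 d a b
  have hc := Real.abs_rpow_abs_sub_sub_rpow_abs_sub_le hp hp1 c a b
  rw [abs_of_nonneg (sub_nonneg.2 hab)] at hd hc
  have hsplit : muR H a b c d =
      (1/2) * ((|d - a| ^ (2*H) - |d - b| ^ (2*H)) - (|c - a| ^ (2*H) - |c - b| ^ (2*H))) := by
    rw [muR]; ring
  rw [hsplit, abs_mul, abs_of_pos (by norm_num : (0:ℝ) < 1/2)]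
  linarith [abs_sub (|d - a| ^ (2*H) - |d - b| ^ (2*H)) (|c - a| ^ (2*H) - |c - b| ^ (2*H))]

theorem muR_bound_general (H : ℝ) (hH0 : 0 < H) (hH : H < 1/2)
    (a b c d : ℝ) (hab : a ≤ b)
    (hcd : c ≤ d) :
    |muR H a b c d| ≤ min ((b - a) ^ (2*H)) ((d - c) ^ (2*H)) :=
  le_min (abs_muR_le hH0.le hH.le hab c d)
    (muR_comm H a b c d ▸ abs_muR_le hH0.le hH.le hcd a b)

theorem muR_bound (H : ℝ) (hH0 : 0 < H) (hH : H < 1/2) (T : ℝ)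
    (a b c d : ℝ) (ha : 0 ≤ a) (hab : a ≤ b) (hbT : b ≤ T)
    (hc : 0 ≤ c) (hcd : c ≤ d) (hdT : d ≤ T) :
    |muR H a b c d| ≤ min ((b - a) ^ (2*H)) ((d - c) ^ (2*H)) :=
  muR_bound_general H hH0 hH a b c d hab hcd
end

section
/- Let X be a separable real Banach space and L a collection of bounded linear functionals on X. Then the norm ‖·‖_X is σ(L)-measurable if and only if σ(L) equals the Borel σ-algebra of X. -/
/-!
Every functional in `L` is continuous, so `σ(L) ≤ B_X` always holds. Conversely, `σ(L)` is
invariant under translations because the functionals are additive; hence if the norm is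
`σ(L)`-measurable then so is `y ↦ ‖y - x‖ = dist y x` for every `x`, which makes every open ball
`σ(L)`-measurable, and in a separable metric space the balls generate the Borel σ-algebra.
-/

open MeasureTheory MeasurableSpace Metric Set

theorem Metric.isTopologicalBasis_ball (X : Type*) [PseudoMetricSpace X] :
    TopologicalSpace.IsTopologicalBasis {s : Set X | ∃ x r, s = ball x r} := by
  refine TopologicalSpace.isTopologicalBasis_of_isOpen_of_nhds ?_ fun a u ha hu => ?_
  · rintro _ ⟨x, r, rfl⟩
    exact isOpen_ball
  · obtain ⟨ε, hε, hsub⟩ := Metric.isOpen_iff.1 hu a ha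
    exact ⟨ball a ε, ⟨a, ε, rfl⟩, mem_ball_self hε, hsub⟩

theorem borel_le_of_measurable_dist {X : Type*} [PseudoMetricSpace X]
    [TopologicalSpace.SeparableSpace X] {m : MeasurableSpace X}
    (h : ∀ x : X, Measurable[m] fun y => dist y x) : borel X ≤ m := by
  rw [(isTopologicalBasis_ball X).borel_eq_generateFrom]
  refine generateFrom_le ?_
  rintro _ ⟨x, r, rfl⟩
  have hball : ball x r = (fun y => dist y x) ⁻¹' Iio r := rfl
  exact hball ▸ h x measurableSet_Iio

theorem measurable_biSup_comap_iff {α X β F : Type*} [FunLike F X β]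
    {mα : MeasurableSpace α} {mβ : MeasurableSpace β} {L : Set F} {g : α → X} :
    Measurable[mα, ⨆ φ ∈ L, MeasurableSpace.comap φ mβ] g ↔ ∀ φ ∈ L, Measurable (φ ∘ g) := by
  simp only [measurable_iff_comap_le, comap_iSup, comap_comp, iSup₂_le_iff]

theorem biSup_comap_le_borel {X β F : Type*} [TopologicalSpace X] [TopologicalSpace β]
    [MeasurableSpace β] [BorelSpace β] [FunLike F X β] [ContinuousMapClass F X β] (L : Set F) :
    ⨆ φ ∈ L, MeasurableSpace.comap φ ‹MeasurableSpace β› ≤ borel X := by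
  borelize X
  exact iSup₂_le fun φ _ => (map_continuous φ).measurable.comap_le

theorem measurable_sub_const_biSup_comap {X β F : Type*} [AddGroup X] [AddGroup β]
    [MeasurableSpace β] [MeasurableSub β] [FunLike F X β] [AddMonoidHomClass F X β]
    (L : Set F) (x : X) :
    Measurable[⨆ φ ∈ L, MeasurableSpace.comap φ ‹_›, ⨆ φ ∈ L, MeasurableSpace.comap φ ‹_›]
      (· - x) := by
  refine measurable_biSup_comap_iff.2 fun φ hφ => ?_
  have hφ_meas : Measurable[⨆ ψ ∈ L, MeasurableSpace.comap ψ ‹_›] φ :=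
    measurable_biSup_comap_iff.1 measurable_id φ hφ
  have hφ_sub : φ ∘ (· - x) = (· - φ x) ∘ φ := funext fun y => map_sub φ y x
  exact hφ_sub ▸ (measurable_sub_const _).comp hφ_meas

theorem norm_measurable_iff_generates_borel
    (X : Type*) [NormedAddCommGroup X] [NormedSpace ℝ X]
    [TopologicalSpace.SeparableSpace X]
    (L : Set (X →L[ℝ] ℝ)) :
    @Measurable X ℝ (⨆ φ ∈ L, MeasurableSpace.comap φ (borel ℝ)) (borel ℝ)
        (fun x => ‖x‖)
      ↔ (⨆ φ ∈ L, MeasurableSpace.comap φ (borel ℝ)) = borel X := by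
  rw [← BorelSpace.measurable_eq (α := ℝ)]
  constructor
  · intro hnorm
    refine le_antisymm (biSup_comap_le_borel L) (borel_le_of_measurable_dist fun x => ?_)
    simp only [dist_eq_norm]
    exact hnorm.comp (measurable_sub_const_biSup_comap L x)
  · intro h
    rw [h]
    borelize X
    exact measurable_norm
end
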